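/- Let the buyer's item value be 1 or 2 with probability 1/2 each, and independently let the outside-option value c be uniformly distributed on [0, 1]. Then every posted-price mechanism earns expected revenue at most 1/2, while the menu mechanism offering the buyer the choice among not participating (keeping the outside option), buying the item at price 1, and receiving the item with probability 2/3 at price 1/3 — the buyer choosing a utility-maximizing option, with ties broken in favor of the seller — earns expected revenue 5/9. In particular, even with a uniformly distributed outside option, posting a fixed price is not optimal when the item value distribution is not DMR or MHR. -/

import Mathlib

open MeasureTheory

/-- The item-value distribution: `1` or `2` with probability `1/2` each. -/
noncomputable def itemMeasure : Measure ℝ :=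
  (1 / 2 : ENNReal) • Measure.dirac 1 + (1 / 2 : ENNReal) • Measure.dirac 2

/-- The outside-option distribution: uniform on `[0, 1]`. -/
noncomputable def outsideMeasure : Measure ℝ := volume.restrict (Set.Icc 0 1)

/-- The joint type distribution: item value and outside option independent. -/
noncomputable def jointMeasure : Measure (ℝ × ℝ) := itemMeasure.prod outsideMeasure

/-- The payment made by a buyer of type `(v, c)` facing the menu
`{opt out, buy at price 1, lottery (2/3, 1/3)}`, choosing a utility-maximizing option
with ties broken in favor of the seller. -/
noncomputable def menuPay (t : ℝ × ℝ) : ℝ :=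
  if (2 / 3) * t.1 - 1 / 3 ≤ t.1 - 1 ∧ t.2 ≤ t.1 - 1 then 1
  else if t.2 ≤ (2 / 3) * t.1 - 1 / 3 then 1 / 3
  else 0

instance : IsFiniteMeasure outsideMeasure := by
  constructor
  rw [outsideMeasure, Measure.restrict_apply_univ, Real.volume_Icc]
  simp

lemma joint_eq : jointMeasure
    = (1/2 : ENNReal) • (outsideMeasure.map (Prod.mk 1))
      + (1/2 : ENNReal) • (outsideMeasure.map (Prod.mk 2)) := by
  rw [jointMeasure, itemMeasure, ← Measure.dirac_prod, ← Measure.dirac_prod]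
  ext s hs
  rw [Measure.prod_apply hs]
  simp only [Measure.add_apply, Measure.smul_apply, smul_eq_mul,
    lintegral_add_measure, lintegral_smul_measure,
    lintegral_dirac' _ (measurable_measure_prodMk_left hs),
    Measure.prod_apply hs]

lemma outside_Iic (a : ℝ) : outsideMeasure (Set.Iic a) = ENNReal.ofReal (min a 1) := by
  rw [outsideMeasure, Measure.restrict_apply measurableSet_Iic]
  have h : Set.Iic a ∩ Set.Icc 0 1 = Set.Icc 0 (min a 1) := by
    ext x
    simp only [Set.mem_inter_iff, Set.mem_Iic, Set.mem_Icc, le_min_iff]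
    tauto
  rw [h, Real.volume_Icc, sub_zero]

lemma jointS (p : ℝ) : jointMeasure {t : ℝ × ℝ | t.2 ≤ t.1 - p}
    = (1/2 : ENNReal) * ENNReal.ofReal (min (1-p) 1)
      + (1/2 : ENNReal) * ENNReal.ofReal (min (2-p) 1) := by
  have hS : MeasurableSet {t : ℝ × ℝ | t.2 ≤ t.1 - p} :=
    measurableSet_le measurable_snd (measurable_fst.sub measurable_const)
  rw [joint_eq, Measure.add_apply, Measure.smul_apply, Measure.smul_apply,
    Measure.map_apply measurable_prodMk_left hS,
    Measure.map_apply measurable_prodMk_left hS]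
  have h1 : Prod.mk (1:ℝ) ⁻¹' {t : ℝ × ℝ | t.2 ≤ t.1 - p} = Set.Iic (1 - p) := rfl
  have h2 : Prod.mk (2:ℝ) ⁻¹' {t : ℝ × ℝ | t.2 ≤ t.1 - p} = Set.Iic (2 - p) := rfl
  rw [h1, h2, outside_Iic, outside_Iic, smul_eq_mul, smul_eq_mul]

lemma hmeas : Measurable menuPay := by
  unfold menuPay
  have h1 : MeasurableSet {t : ℝ × ℝ | (2/3) * t.1 - 1/3 ≤ t.1 - 1 ∧ t.2 ≤ t.1 - 1} := by
    apply MeasurableSet.inter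
    · exact measurableSet_le (((measurable_fst.const_mul _).sub measurable_const))
        (measurable_fst.sub measurable_const)
    · exact measurableSet_le measurable_snd (measurable_fst.sub measurable_const)
  have h2 : MeasurableSet {t : ℝ × ℝ | t.2 ≤ (2/3) * t.1 - 1/3} :=
    measurableSet_le measurable_snd ((measurable_fst.const_mul _).sub measurable_const)
  exact (measurable_const.ite h1 (measurable_const.ite h2 measurable_const))

lemma hbound (t : ℝ × ℝ) : ‖menuPay t‖ ≤ 1 := by
  unfold menuPay; split_ifs <;> norm_num

/-- With item value uniform on `{1, 2}` and an independent outside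
option uniform on `[0,1]`: every posted price `p ≥ 0` (which sells iff `v − p ≥ c`)
earns at most `1/2`, while the menu mechanism offering the item at price `1` or with
probability `2/3` at price `1/3` earns exactly `5/9`.  Hence posting a fixed price is
not optimal here. -/
theorem uniform_outside_option_lottery_beats_posted_price :
    (∀ p : ℝ, 0 ≤ p →
      p * (jointMeasure {t : ℝ × ℝ | t.2 ≤ t.1 - p}).toReal ≤ 1 / 2) ∧
    (∫ t, menuPay t ∂jointMeasure) = 5 / 9 := by
  constructor
  · intro p hp
    have hmax : ∀ x : ℝ, (ENNReal.ofReal x).toReal = max x 0 := by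
      intro x
      rcases le_total x 0 with h | h
      · simp [ENNReal.ofReal_eq_zero.mpr h, max_eq_right h]
      · rw [ENNReal.toReal_ofReal h, max_eq_left h]
    have key : ∀ x y : ℝ,
        ((1/2 : ENNReal) * ENNReal.ofReal x + (1/2 : ENNReal) * ENNReal.ofReal y).toReal
          = (max x 0)/2 + (max y 0)/2 := by
      intro x y
      rw [ENNReal.toReal_add (ENNReal.mul_ne_top (by norm_num) ENNReal.ofReal_ne_top)
          (ENNReal.mul_ne_top (by norm_num) ENNReal.ofReal_ne_top),
        ENNReal.toReal_mul, ENNReal.toReal_mul, hmax, hmax]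
      have ht : (1/2 : ENNReal).toReal = 1/2 := by norm_num
      rw [ht]; ring
    rw [jointS, min_eq_left (by linarith : (1:ℝ)-p ≤ 1), key]
    rcases le_or_gt p 1 with h1 | h1
    · rw [max_eq_left (by linarith), min_eq_right (by linarith),
        max_eq_left (by norm_num)]
      nlinarith
    · rcases le_or_gt p 2 with h2 | h2
      · rw [max_eq_right (by linarith), min_eq_left (by linarith),
          max_eq_left (by linarith)]
        nlinarith
      · rw [max_eq_right (by linarith), min_eq_left (by linarith),
          max_eq_right (by linarith)]
        nlinarith
  · have hcomp : ∀ a : ℝ, Integrable (menuPay ∘ Prod.mk a) outsideMeasure := by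
      intro a
      apply Integrable.mono' (integrable_const 1)
        ((hmeas.comp measurable_prodMk_left).aestronglyMeasurable)
      filter_upwards with c
      exact hbound _
    have hI : ∀ a : ℝ, Integrable menuPay (outsideMeasure.map (Prod.mk a)) := fun a =>
      (integrable_map_measure hmeas.aestronglyMeasurable
        measurable_prodMk_left.aemeasurable).mpr (hcomp a)
    have hint : ∀ a : ℝ, ∫ t, menuPay t ∂(outsideMeasure.map (Prod.mk a))
        = ∫ c, menuPay (a, c) ∂outsideMeasure := fun a =>
      integral_map measurable_prodMk_left.aemeasurable hmeas.aestronglyMeasurable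
    have e1 : (fun c : ℝ => menuPay (1, c))
        = Set.indicator (Set.Iic (1/3 : ℝ)) (fun _ => (1/3 : ℝ)) := by
      funext c
      simp only [menuPay, Set.indicator_apply, Set.mem_Iic]
      norm_num
    have e2 : (fun c : ℝ => menuPay (2, c))
        = Set.indicator (Set.Iic (1 : ℝ)) (fun _ => (1 : ℝ)) := by
      funext c
      simp only [menuPay, Set.indicator_apply, Set.mem_Iic]
      norm_num
      split_ifs <;> norm_num
    have v1 : ∫ c, menuPay (1, c) ∂outsideMeasure = 1/9 := by
      rw [show (∫ c, menuPay (1, c) ∂outsideMeasure)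
        = ∫ c, Set.indicator (Set.Iic (1/3 : ℝ)) (fun _ => (1/3 : ℝ)) c ∂outsideMeasure
        from by rw [← e1]]
      rw [integral_indicator measurableSet_Iic, setIntegral_const, Measure.real, outside_Iic]
      rw [show min (1/3 : ℝ) 1 = 1/3 by norm_num, ENNReal.toReal_ofReal (by norm_num)]
      norm_num
    have v2 : ∫ c, menuPay (2, c) ∂outsideMeasure = 1 := by
      rw [show (∫ c, menuPay (2, c) ∂outsideMeasure)
        = ∫ c, Set.indicator (Set.Iic (1 : ℝ)) (fun _ => (1 : ℝ)) c ∂outsideMeasure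
        from by rw [← e2]]
      rw [integral_indicator measurableSet_Iic, setIntegral_const, Measure.real, outside_Iic]
      rw [show min (1 : ℝ) 1 = 1 by norm_num, ENNReal.toReal_ofReal (by norm_num)]
      norm_num
    rw [joint_eq, integral_add_measure ((hI 1).smul_measure (by norm_num))
      ((hI 2).smul_measure (by norm_num)),
      integral_smul_measure, integral_smul_measure, hint 1, hint 2, v1, v2]
    norm_num
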